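/- arXiv:1501.00689 — 3 statements merged into one kernel-verified Lean document; each statement's English description precedes it below -/
import Mathlib

section
/- Let (X, τ) be a sequential topological space and D ⊆ X an open subset that, with the subspace topology, is Hausdorff and locally compact. Let τ* be the topology on X generated by the subbasis τ ∪ {X \ K : K a compact subset of D}, and let (τ*)_Seq := (τ*)_{L_{τ*}} be the topology derived from the associated limit operator L_{τ*}. Then (τ*)_Seq is sequential, satisfies (A_Fin) and (A_Sep), and is contained in every sequential topology on X satisfying (A_Fin) and (A_Sep); hence it is the unique minimal topology among the sequential topologies satisfying (A_Fin) and (A_Sep). Moreover, the subspace topologies induced on D by (τ*)_Seq and by τ coincide. -/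
/-!
Convergence in `τ*` means convergence in `τ` together with eventually leaving every compact
`K ⊆ D` that misses the limit. For a limit in `D` the second condition is automatic, since compact
subsets of the Hausdorff space `D` are closed in `D`. For a limit `q ∉ D` of a sequence converging
in a topology with (A_Fin) and (A_Sep) it holds as well: finitely many of the (A_Sep)-neighbourhoods
of `q` separate `q` from all of `K`. Hence such a topology, if sequential, is finer than
`(τ*)_Seq`. Local compactness of `D` gives (A_Sep) for `τ*` itself, with `U` the interior of a
compact neighbourhood `K ⊆ D` and `V = X \ K`; and as `τ` is sequential and `D` is open, `τ` and
`(τ*)_Seq` have the same open subsets of `D`.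
-/

open Set Filter Topology

universe u

/-- A limit operator on `X`: a map from sequences to sets of "limits",
compatible with subsequences. -/
def IsLimitOp {X : Type u} (L : (ℕ → X) → Set X) : Prop :=
  ∀ (σ : ℕ → X) (φ : ℕ → ℕ), StrictMono φ → L σ ⊆ L (σ ∘ φ)

/-- `C` is sequentially closed with respect to the limit operator `L`. -/
def SeqClosedFor {X : Type u} (L : (ℕ → X) → Set X) (C : Set X) : Prop :=
  ∀ σ : ℕ → X, (∀ n, σ n ∈ C) → L σ ⊆ C

/-- The topology derived from a limit operator `L`: its closed sets are exactly
the sets `C` such that `L σ ⊆ C` for every sequence `σ` with values in `C`. -/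
def derivedTop {X : Type u} (L : (ℕ → X) → Set X) (hL : IsLimitOp L) :
    TopologicalSpace X :=
  TopologicalSpace.ofClosed {C | SeqClosedFor L C}
    (fun σ h => absurd (h 0) (Set.notMem_empty _))
    (fun A hA σ hσ p hp => by
      rw [Set.mem_sInter]
      intro C hC
      exact hA hC σ (fun n => Set.mem_sInter.mp (hσ n) C hC) hp)
    (by
      intro C hC B hB σ hσ p hp
      by_cases hinf : {n | σ n ∈ C}.Infinite
      · exact Or.inl (hC _ (fun n => Nat.nth_mem_of_infinite hinf n)
          (hL σ _ (Nat.nth_strictMono hinf) hp))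
      · have hfin : {n | σ n ∈ C}.Finite := Set.not_infinite.mp hinf
        have hBinf : {n | σ n ∈ B}.Infinite :=
          Set.Infinite.mono (fun n hn => (hσ n).resolve_left hn) hfin.infinite_compl
        exact Or.inr (hB _ (fun n => Nat.nth_mem_of_infinite hBinf n)
          (hL σ _ (Nat.nth_strictMono hBinf) hp)))

/-- The limit operator associated to a topology `t`: it assigns to each sequence
the set of all its limits in `t`. -/
def assocLimOp {X : Type u} (t : TopologicalSpace X) : (ℕ → X) → Set X :=
  fun σ => {p | Filter.Tendsto σ Filter.atTop (@nhds X t p)}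

theorem assocLimOp_isLimitOp {X : Type u} (t : TopologicalSpace X) :
    IsLimitOp (assocLimOp t) :=
  fun _σ _φ hφ _p hp => hp.comp hφ.tendsto_atTop

/-- `τ_Seq`: the topology derived from the limit operator associated to `t`. -/
def seqModTop {X : Type u} (t : TopologicalSpace X) : TopologicalSpace X :=
  derivedTop (assocLimOp t) (assocLimOp_isLimitOp t)

/-- `L` is of first order on `D`. -/
def IsFirstOrderOpOn {X : Type u} (L : (ℕ → X) → Set X) (hL : IsLimitOp L)
    (D : Set X) : Prop :=
  ∀ σ : ℕ → X, (∀ n, σ n ∈ D) → ∀ p ∈ D,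
    (p ∈ L σ ↔ Filter.Tendsto σ Filter.atTop (@nhds X (derivedTop L hL) p))

/-- `L` is of first order. -/
def IsFirstOrderOp {X : Type u} (L : (ℕ → X) → Set X) (hL : IsLimitOp L) : Prop :=
  ∀ (σ : ℕ → X) (p : X),
    p ∈ L σ ↔ Filter.Tendsto σ Filter.atTop (@nhds X (derivedTop L hL) p)

/-- A limit operator is coherent if every constant sequence has its value as a limit. -/
def CoherentOp {X : Type u} (L : (ℕ → X) → Set X) : Prop :=
  ∀ x : X, x ∈ L (fun _ => x)

/-- The transfinite iterates of a limit operator: `L^1 σ = L σ` and, for `i ≠ 1`,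
`L^i σ = {p | p ∈ L ρ for some sequence ρ with values in ⋃_{j<i} L^j σ}`. -/
noncomputable def iterOp {X : Type u} (L : (ℕ → X) → Set X) (σ : ℕ → X)
    (i : Ordinal.{0}) : Set X :=
  if i = 1 then L σ
  else {p | ∃ ρ : ℕ → X,
    (∀ n, ∃ j : Ordinal.{0}, ∃ _hj : j < i, ρ n ∈ iterOp L σ j) ∧ p ∈ L ρ}
termination_by i

open Classical in
/-- The modified limit operator `L*` relative to a subset `D`. -/
noncomputable def modOp {X : Type u} (L : (ℕ → X) → Set X) (D : Set X) :
    (ℕ → X) → Set X := fun σ =>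
  if ∃ φ : ℕ → ℕ, StrictMono φ ∧ ∃ p ∈ D, p ∈ L (σ ∘ φ) then L σ ∩ D else L σ

/-- The `D`-separating topology `τ*`: generated by the subbasis consisting of the
`t`-open sets together with the complements of compact subsets of `D`. -/
def sepTop {X : Type u} (t : TopologicalSpace X) (D : Set X) : TopologicalSpace X :=
  TopologicalSpace.generateFrom
    ({U : Set X | @IsOpen X t U} ∪ {V : Set X | ∃ K, K ⊆ D ∧ @IsCompact X t K ∧ V = Kᶜ})

/-- Condition (A_Fin): `t'` refines `t`. -/
def AFin {X : Type u} (t t' : TopologicalSpace X) : Prop :=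
  ∀ U : Set X, @IsOpen X t U → @IsOpen X t' U

/-- Condition (A_Sep): every `p ∈ D` and `q ∉ D` are separated by a `t`-open set
and a `t'`-open set. -/
def ASep {X : Type u} (t t' : TopologicalSpace X) (D : Set X) : Prop :=
  ∀ p ∈ D, ∀ q ∈ (Dᶜ : Set X), ∃ U V : Set X,
    @IsOpen X t U ∧ @IsOpen X t' V ∧ p ∈ U ∧ q ∈ V ∧ U ∩ V = ∅

/-- The restriction of a limit operator `L` to a subset `D`, as an operator on `↥D`:
`L|_D(σ) = L(σ) ∩ D`. -/
def restrictOp {X : Type u} (L : (ℕ → X) → Set X) (D : Set X) :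
    (ℕ → D) → Set D :=
  fun σ => {d : D | (d : X) ∈ L (fun n => (σ n : X))}

section DerivedTopology

variable {X : Type u} {L : (ℕ → X) → Set X}

theorem tendsto_derivedTop (hL : IsLimitOp L) {σ : ℕ → X} {p : X} (hp : p ∈ L σ) :
    Tendsto σ atTop (@nhds X (derivedTop L hL) p) := by
  let _ := derivedTop L hL
  refine tendsto_nhds.mpr fun U (hU : SeqClosedFor L Uᶜ) hpU => ?_
  by_contra h
  obtain ⟨φ, hφ, hφU⟩ := extraction_of_frequently_atTop (not_eventually.mp h)
  exact hU (σ ∘ φ) hφU (hL σ φ hφ hp) hpU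

theorem sequentialSpace_derivedTop (hL : IsLimitOp L) :
    @SequentialSpace X (derivedTop L hL) := by
  let _ := derivedTop L hL
  refine ⟨fun C hC => ⟨?_⟩⟩
  show SeqClosedFor L Cᶜᶜ
  rw [compl_compl]
  exact fun σ hσ p hp => hC hσ (tendsto_derivedTop hL hp)

theorem seqModTop_le (s : TopologicalSpace X) : seqModTop s ≤ s := by
  refine isOpen_implies_isOpen_iff.mp fun U hU σ hσ p hp hpU => ?_
  have hev : ∀ᶠ n in atTop, σ n ∈ U := (@tendsto_nhds _ s _ _ _ _).mp hp U hU hpU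
  obtain ⟨n, hn⟩ := hev.exists
  exact hσ n hn

theorem le_seqModTop {s t' : TopologicalSpace X} (hSeq : @SequentialSpace X t')
    (h : ∀ (σ : ℕ → X) (p : X),
      Tendsto σ atTop (@nhds X t' p) → Tendsto σ atTop (@nhds X s p)) :
    t' ≤ seqModTop s := by
  refine isOpen_implies_isOpen_iff.mp fun U (hU : SeqClosedFor _ Uᶜ) => ?_
  let _ := t'
  have hU' : IsSeqClosed Uᶜ := fun σ p hσ hp => hU σ hσ (h σ p hp)
  exact isClosed_compl_iff.mp hU'.isClosed

end DerivedTopology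

theorem IsCompact.mem_of_tendsto_of_subset {X α : Type*} [TopologicalSpace X] {D K : Set X}
    [T2Space D] (hK : IsCompact K) (hKD : K ⊆ D) {l : Filter α} [l.NeBot] {f : α → X}
    (hf : ∀ a, f a ∈ K) {p : X} (hp : Tendsto f l (𝓝 p)) (hpD : p ∈ D) : p ∈ K := by
  have hK' : IsCompact ((↑) ⁻¹' K : Set D) :=
    (IsInducing.subtypeVal.isCompact_preimage_iff (by rwa [Subtype.range_coe])).mpr hK
  have hfD : Tendsto (fun a => (⟨f a, hKD (hf a)⟩ : D)) l (𝓝 ⟨p, hpD⟩) :=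
    tendsto_subtype_rng.mpr hp
  exact hK'.isClosed.mem_of_tendsto hfD (.of_forall hf)

theorem ASep.mono {X : Type u} {t t' t'' : TopologicalSpace X} {D : Set X}
    (h : ASep t t' D) (hle : t'' ≤ t') : ASep t t'' D := by
  intro p hp q hq
  obtain ⟨U, V, hU, hV, hpU, hqV, hUV⟩ := h p hp q hq
  exact ⟨U, V, hU, hle V hV, hpU, hqV, hUV⟩

section SepTop

variable {X : Type u} (t : TopologicalSpace X) {D : Set X}

theorem sepTop_le : sepTop t D ≤ t :=
  fun _ hU => TopologicalSpace.isOpen_generateFrom_of_mem (Or.inl hU)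

theorem isOpen_sepTop_compl {K : Set X} (hKD : K ⊆ D) (hK : @IsCompact X t K) :
    IsOpen[sepTop t D] Kᶜ :=
  TopologicalSpace.isOpen_generateFrom_of_mem (Or.inr ⟨K, hKD, hK, rfl⟩)

theorem tendsto_sepTop_iff {σ : ℕ → X} {p : X} :
    Tendsto σ atTop (@nhds X (sepTop t D) p) ↔ Tendsto σ atTop (@nhds X t p) ∧
      ∀ K ⊆ D, @IsCompact X t K → p ∉ K → ∀ᶠ n in atTop, σ n ∉ K := by
  let _ := t
  rw [sepTop, TopologicalSpace.tendsto_nhds_generateFrom_iff, tendsto_nhds]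
  constructor
  · exact fun h => ⟨fun U hU => h U (Or.inl hU),
      fun K hKD hK => h Kᶜ (Or.inr ⟨K, hKD, hK, rfl⟩)⟩
  · rintro ⟨h, hK⟩ U (hU | ⟨K, hKD, hK', rfl⟩)
    exacts [h U hU, hK K hKD hK']

variable {t}

theorem tendsto_sepTop_of_mem (hT2 : @T2Space D (TopologicalSpace.induced (↑) t))
    {σ : ℕ → X} {p : X} (hpD : p ∈ D) (hp : Tendsto σ atTop (@nhds X t p)) :
    Tendsto σ atTop (@nhds X (sepTop t D) p) := by
  let _ := t
  refine (tendsto_sepTop_iff t).mpr ⟨hp, fun K hKD hK hpK => ?_⟩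
  by_contra h
  obtain ⟨φ, hφ, hφK⟩ := extraction_of_frequently_atTop
    ((not_eventually.mp h).mono fun _ => not_not.mp)
  exact hpK (hK.mem_of_tendsto_of_subset hKD hφK (hp.comp hφ.tendsto_atTop) hpD)

theorem tendsto_sepTop_of_aSep (hT2 : @T2Space D (TopologicalSpace.induced (↑) t))
    {t' : TopologicalSpace X} (hFin : AFin t t') (hSep : ASep t t' D) {σ : ℕ → X} {p : X}
    (hp : Tendsto σ atTop (@nhds X t' p)) :
    Tendsto σ atTop (@nhds X (sepTop t D) p) := by
  have hpt : Tendsto σ atTop (@nhds X t p) := hp.mono_right (nhds_mono hFin)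
  by_cases hpD : p ∈ D
  · exact tendsto_sepTop_of_mem hT2 hpD hpt
  refine (tendsto_sepTop_iff t).mpr ⟨hpt, fun K hKD hK _ => ?_⟩
  let _ := t
  choose! U V hU hV hkU hpV hUV using fun k (hk : k ∈ K) => hSep k (hKD hk) p hpD
  obtain ⟨b, hbK, hb, hKU⟩ := hK.elim_finite_subcover_image hU
    fun k hk => mem_biUnion hk (hkU k hk)
  have hVb : IsOpen[t'] (⋂ k ∈ b, V k) := @Finite.isOpen_biInter _ _ t' _ _ hb
    fun k hk => hV k (hbK hk)
  have hpVb : p ∈ ⋂ k ∈ b, V k := mem_biInter fun k hk => hpV k (hbK hk)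
  filter_upwards [(@tendsto_nhds _ t' _ _ _ _).mp hp _ hVb hpVb] with n hn hnK
  obtain ⟨k, hkb, hnU⟩ := mem_iUnion₂.mp (hKU hnK)
  exact (hUV k (hbK hkb)).subset ⟨hnU, mem_iInter₂.mp hn k hkb⟩

theorem aSep_sepTop (hD : IsOpen[t] D)
    (hLC : @LocallyCompactSpace D (TopologicalSpace.induced (↑) t)) :
    ASep t (sepTop t D) D := by
  intro p hp q hq
  let _ := t
  obtain ⟨K, hKc, hK⟩ := exists_compact_mem_nhds (⟨p, hp⟩ : D)
  have hKp : (↑) '' K ∈ 𝓝 p :=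
    (hD.isOpenEmbedding_subtypeVal.image_mem_nhds (x := ⟨p, hp⟩)).mpr hK
  refine ⟨interior ((↑) '' K), ((↑) '' K)ᶜ, isOpen_interior,
    isOpen_sepTop_compl t (Subtype.coe_image_subset D K) (hKc.image continuous_subtype_val),
    mem_interior_iff_mem_nhds.mpr hKp, fun hqK => hq (Subtype.coe_image_subset D K hqK), ?_⟩
  exact disjoint_iff_inter_eq_empty.mp (disjoint_compl_right.mono_left interior_subset)

theorem isOpen_inter_of_isOpen_seqModTop_sepTop (hSeq : @SequentialSpace X t)
    (hD : IsOpen[t] D)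
    (hT2 : @T2Space D (TopologicalSpace.induced (↑) t)) {U : Set X}
    (hU : IsOpen[seqModTop (sepTop t D)] U) : IsOpen[t] (U ∩ D) := by
  let _ := t
  refine isClosed_compl_iff.mp (IsSeqClosed.isClosed fun σ p hσ hp => ?_)
  by_contra hpUD
  rw [notMem_compl_iff] at hpUD
  obtain ⟨N, hN⟩ := eventually_atTop.mp (tendsto_nhds.mp hp D hD hpUD.2)
  have hpN := tendsto_sepTop_of_mem hT2 hpUD.2 (hp.comp (tendsto_add_atTop_nat N))
  exact (hU : SeqClosedFor _ Uᶜ) _ (fun n hn => hσ (n + N) ⟨hn, hN _ (Nat.le_add_left N n)⟩)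
    hpN hpUD.1

theorem induced_seqModTop_sepTop (hSeq : @SequentialSpace X t) (hD : IsOpen[t] D)
    (hT2 : @T2Space D (TopologicalSpace.induced (↑) t)) :
    TopologicalSpace.induced ((↑) : D → X) (seqModTop (sepTop t D)) =
      TopologicalSpace.induced (↑) t := by
  refine le_antisymm (induced_mono ((seqModTop_le _).trans (sepTop_le t))) fun S hS => ?_
  obtain ⟨U, hU, rfl⟩ := (@isOpen_induced_iff _ _ (seqModTop (sepTop t D)) _ _).mp hS
  refine (@isOpen_induced_iff _ _ t _ _).mpr
    ⟨U ∩ D, isOpen_inter_of_isOpen_seqModTop_sepTop hSeq hD hT2 hU, ?_⟩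
  ext x
  simp

end SepTop

theorem stmt_10 {X : Type u} (t : TopologicalSpace X)
    (hSeq : @SequentialSpace X t) (D : Set X) (hD : @IsOpen X t D)
    (hT2 : @T2Space D (TopologicalSpace.induced (Subtype.val : D → X) t))
    (hLC : @LocallyCompactSpace D (TopologicalSpace.induced (Subtype.val : D → X) t)) :
    @SequentialSpace X (seqModTop (sepTop t D)) ∧
    AFin t (seqModTop (sepTop t D)) ∧
    ASep t (seqModTop (sepTop t D)) D ∧
    (∀ t' : TopologicalSpace X, @SequentialSpace X t' → AFin t t' → ASep t t' D →
      ∀ U : Set X, @IsOpen X (seqModTop (sepTop t D)) U → @IsOpen X t' U) ∧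
    (∀ t'' : TopologicalSpace X, @SequentialSpace X t'' → AFin t t'' → ASep t t'' D →
      (∀ t' : TopologicalSpace X, @SequentialSpace X t' → AFin t t' → ASep t t' D →
        (∀ U : Set X, @IsOpen X t' U → @IsOpen X t'' U) →
        ∀ U : Set X, @IsOpen X t'' U → @IsOpen X t' U) →
      t'' = seqModTop (sepTop t D)) ∧
    TopologicalSpace.induced (Subtype.val : D → X) (seqModTop (sepTop t D)) =
      TopologicalSpace.induced (Subtype.val : D → X) t := by
  have hSeqMod := sequentialSpace_derivedTop (assocLimOp_isLimitOp (sepTop t D))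
  have hFin : AFin t (seqModTop (sepTop t D)) := (seqModTop_le _).trans (sepTop_le t)
  have hSep : ASep t (seqModTop (sepTop t D)) D := (aSep_sepTop hD hLC).mono (seqModTop_le _)
  have hMin : ∀ t' : TopologicalSpace X, @SequentialSpace X t' → AFin t t' → ASep t t' D →
      t' ≤ seqModTop (sepTop t D) := fun t' hSeq' hFin' hSep' =>
    le_seqModTop hSeq' fun _ _ => tendsto_sepTop_of_aSep hT2 hFin' hSep'
  refine ⟨hSeqMod, hFin, hSep, hMin, fun t'' hSeq'' hFin'' hSep'' hMinimal => ?_,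
    induced_seqModTop_sepTop hSeq hD hT2⟩
  exact le_antisymm (hMin t'' hSeq'' hFin'' hSep'')
    (hMinimal _ hSeqMod hFin hSep (hMin t'' hSeq'' hFin'' hSep''))
end

section
/- Let L and L' be limit operators on a set X with derived topologies τ_L and τ_{L'}, let D ⊆ X be open, locally compact and Hausdorff for τ_L, and assume τ_L ⊆ τ_{L'}. Suppose additionally that L is of first order on D and that L(σ) ∩ D = L'(σ) ∩ D for every sequence σ with values in D. If, for every sequence σ in X, L'(σ) ∩ D ≠ ∅ implies L'(σ) ⊆ D, then the topology τ_{L'} satisfies (A_Sep) with respect to (τ_L, D). -/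
open Set Filter Topology

universe u

/-!
Fix `p ∈ D` and a compact neighbourhood `K ⊆ D` of `p`. Because `L` is of first order on the
open set `D`, the subspace `D` is sequential (a sequentially closed `A ⊆ D` is the trace of the
`L`-sequentially closed set `A ∪ Dᶜ`), so the compact set `K`, closed in the Hausdorff space `D`,
is sequentially compact. Given a sequence in `K` and an `L'`-limit `z` of it, pass to
a subsequence converging in `D`; its limit lies in `L'` of the subsequence, so by the last
hypothesis `z ∈ D`, where `L'` agrees with the first-order operator `L`; hence `z ∈ K` by
uniqueness of limits in `D`. Thus `K` is `τ_{L'}`-closed, and the interior of `K` and its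
complement separate `p` from any point outside `D`.
-/

section SequentialSpace

variable {X : Type*} [TopologicalSpace X] [SequentialSpace X]

theorem IsClosed.sequentialSpace {s : Set X} (hs : IsClosed s) : SequentialSpace s := by
  refine ⟨fun A hA => ?_⟩
  rw [hs.isClosedEmbedding_subtypeVal.isClosed_iff_image_isClosed]
  refine IsSeqClosed.isClosed fun u p hu hup => ?_
  choose a haA ha using hu
  have hps : p ∈ s := hs.mem_of_tendsto hup (.of_forall fun n => ha n ▸ (a n).2)
  refine ⟨⟨p, hps⟩, hA haA ?_, rfl⟩
  rw [tendsto_subtype_rng]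
  simpa only [ha] using hup

theorem IsCompact.isSeqCompact_of_isClosed {K : Set X} (hK : IsCompact K) (hc : IsClosed K) :
    IsSeqCompact K := by
  have := hc.sequentialSpace
  have := isCompact_iff_compactSpace.1 hK
  exact isSeqCompact_iff_seqCompactSpace.2 inferInstance

end SequentialSpace

section LimitOperator

variable {X : Type u} {L L' : (ℕ → X) → Set X}

theorem isClosed_derivedTop_iff (hL : IsLimitOp L) {C : Set X} :
    IsClosed[derivedTop L hL] C ↔ SeqClosedFor L C := by
  rw [← @isOpen_compl_iff X C (derivedTop L hL)]
  show Cᶜᶜ ∈ {C | SeqClosedFor L C} ↔ _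
  rw [compl_compl]
  rfl

theorem SeqClosedFor.mem_of_frequently (hL : IsLimitOp L) {C : Set X} (hC : SeqClosedFor L C)
    {ρ : ℕ → X} (hρ : ∃ᶠ n in atTop, ρ n ∈ C) {y : X} (hy : y ∈ L ρ) : y ∈ C :=
  let ⟨φ, hφ, hφC⟩ := extraction_of_frequently_atTop hρ
  hC _ hφC (hL ρ φ hφ hy)

theorem sequentialSpace_derivedTop_subtype (hL : IsLimitOp L) {D : Set X}
    (hD : IsOpen[derivedTop L hL] D) (hfoD : IsFirstOrderOpOn L hL D) :
    @SequentialSpace D (.induced Subtype.val (derivedTop L hL)) := by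
  let := derivedTop L hL
  refine ⟨fun A hA => isClosed_induced_iff.2 ⟨(↑) '' A ∪ Dᶜ, ?_, ?_⟩⟩
  · refine (isClosed_derivedTop_iff hL).2 fun ρ hρ y hy => ?_
    by_cases hyD : y ∈ D
    · have hfreq : ∃ᶠ n in atTop, ρ n ∈ (↑) '' A := by
        by_contra h
        have hDc : ∃ᶠ n in atTop, ρ n ∈ Dᶜ :=
          ((not_frequently.1 h).mono fun n hn => (hρ n).resolve_left hn).frequently
        exact ((isClosed_derivedTop_iff hL).1 hD.isClosed_compl).mem_of_frequently hL hDc hy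
          hyD
      obtain ⟨φ, hφ, hφA⟩ := extraction_of_frequently_atTop hfreq
      choose a haA ha using hφA
      have hρy : Tendsto (ρ ∘ φ) atTop (𝓝 y) :=
        (hfoD _ (fun n => (ha n ▸ (a n).2 : ρ (φ n) ∈ D)) y hyD).1 (hL ρ φ hφ hy)
      refine Or.inl ⟨⟨y, hyD⟩, hA haA ?_, rfl⟩
      rw [tendsto_subtype_rng]
      simpa only [ha, Function.comp_def] using hρy
    · exact Or.inr hyD
  · ext a
    simp

theorem isSeqCompact_derivedTop (hL : IsLimitOp L) {D K : Set X}
    (hD : IsOpen[derivedTop L hL] D)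
    (hT2 : @T2Space D (.induced Subtype.val (derivedTop L hL)))
    (hfoD : IsFirstOrderOpOn L hL D)
    (hK : @IsCompact X (derivedTop L hL) K) (hKD : K ⊆ D) :
    @IsSeqCompact X (derivedTop L hL) K := by
  let := derivedTop L hL
  have := sequentialSpace_derivedTop_subtype hL hD hfoD
  have hKD' : (↑) '' ((↑) ⁻¹' K : Set D) = K :=
    image_preimage_eq_of_subset (by simpa using hKD)
  rw [← hKD'] at hK ⊢
  have hK' := Subtype.isCompact_iff.2 hK
  exact Subtype.isSeqCompact_iff.1 (hK'.isSeqCompact_of_isClosed hK'.isClosed)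

theorem seqClosedFor_of_isSeqCompact (hL : IsLimitOp L) (hL' : IsLimitOp L') {D K : Set X}
    (hT2 : @T2Space D (.induced Subtype.val (derivedTop L hL)))
    (hfoD : IsFirstOrderOpOn L hL D)
    (hLL' : ∀ σ : ℕ → X, (∀ n, σ n ∈ D) → L σ ∩ D = L' σ ∩ D)
    (hL'D : ∀ σ : ℕ → X, (L' σ ∩ D).Nonempty → L' σ ⊆ D)
    (hK : @IsSeqCompact X (derivedTop L hL) K) (hKD : K ⊆ D) :
    SeqClosedFor L' K := by
  let := derivedTop L hL
  intro σ hσK z hz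
  obtain ⟨y, hyK, φ, hφ, hσy⟩ := hK hσK
  have hyD : y ∈ D := hKD hyK
  have hσD : ∀ n, (σ ∘ φ) n ∈ D := fun n => hKD (hσK (φ n))
  have hyL' : y ∈ L' (σ ∘ φ) := ((hLL' _ hσD).le ⟨(hfoD _ hσD y hyD).2 hσy, hyD⟩).1
  have hzL' : z ∈ L' (σ ∘ φ) := hL' σ φ hφ hz
  have hzD : z ∈ D := hL'D _ ⟨y, hyL', hyD⟩ hzL'
  have hσz : Tendsto (σ ∘ φ) atTop (𝓝 z) :=
    (hfoD _ hσD z hzD).1 ((hLL' _ hσD).ge ⟨hzL', hzD⟩).1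
  have hzy : z = y := congrArg Subtype.val <|
    tendsto_nhds_unique (f := fun n => (⟨σ (φ n), hσD n⟩ : D)) (a := ⟨z, hzD⟩)
      (b := ⟨y, hyD⟩) (tendsto_subtype_rng.2 hσz) (tendsto_subtype_rng.2 hσy)
  exact hzy ▸ hyK

end LimitOperator

theorem stmt_12_general {X : Type u} (L L' : (ℕ → X) → Set X)
    (hL : IsLimitOp L) (hL' : IsLimitOp L') (D : Set X)
    (hD : @IsOpen X (derivedTop L hL) D)
    (hT2 : @T2Space D (TopologicalSpace.induced (Subtype.val : D → X) (derivedTop L hL)))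
    (hLC : @LocallyCompactSpace D (TopologicalSpace.induced (Subtype.val : D → X) (derivedTop L hL)))
    (hfoD : IsFirstOrderOpOn L hL D)
    (he5 : ∀ σ : ℕ → X, (∀ n, σ n ∈ D) → L σ ∩ D = L' σ ∩ D)
    (hstar : ∀ σ : ℕ → X, (L' σ ∩ D).Nonempty → L' σ ⊆ D) :
    ASep (derivedTop L hL) (derivedTop L' hL') D := by
  let := derivedTop L hL
  intro p hp q hq
  obtain ⟨s, hs, -, hsc⟩ := hLC.local_compact_nhds (⟨p, hp⟩ : D) univ univ_mem
  have hKD : Subtype.val '' s ⊆ D := image_subset_range _ _ |>.trans Subtype.range_val.le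
  have hK : SeqClosedFor L' (Subtype.val '' s) :=
    seqClosedFor_of_isSeqCompact hL hL' hT2 hfoD he5 hstar
      (isSeqCompact_derivedTop hL hD hT2 hfoD (hsc.image continuous_subtype_val) hKD) hKD
  refine ⟨Subtype.val '' interior s, (Subtype.val '' s)ᶜ,
    hD.isOpenMap_subtype_val _ isOpen_interior, ((isClosed_derivedTop_iff hL').2 hK).isOpen_compl,
    ⟨⟨p, hp⟩, mem_interior_iff_mem_nhds.2 hs, rfl⟩, fun hqK => hq (hKD hqK), ?_⟩
  exact disjoint_compl_right.mono_left (image_mono interior_subset) |>.eq_bot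

theorem stmt_12 {X : Type u} (L L' : (ℕ → X) → Set X)
    (hL : IsLimitOp L) (hL' : IsLimitOp L') (D : Set X)
    (hD : @IsOpen X (derivedTop L hL) D)
    (hT2 : @T2Space D (TopologicalSpace.induced (Subtype.val : D → X) (derivedTop L hL)))
    (hLC : @LocallyCompactSpace D (TopologicalSpace.induced (Subtype.val : D → X) (derivedTop L hL)))
    (hfin : AFin (derivedTop L hL) (derivedTop L' hL'))
    (hfoD : IsFirstOrderOpOn L hL D)
    (he5 : ∀ σ : ℕ → X, (∀ n, σ n ∈ D) → L σ ∩ D = L' σ ∩ D)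
    (hstar : ∀ σ : ℕ → X, (L' σ ∩ D).Nonempty → L' σ ⊆ D) :
    ASep (derivedTop L hL) (derivedTop L' hL') D :=
  stmt_12_general L L' hL hL' D hD hT2 hLC hfoD he5 hstar
end

section
/- Let L be a coherent limit operator on a set X with derived topology τ := τ_L, and let D ⊆ X be an open subset that is Hausdorff and locally compact in the subspace topology. Write L*_τ := (L_τ)* for the modification of the associated limit operator L_τ. If a point p ∈ X \ D satisfies p ∈ L*_τ(σ) for some sequence σ in X, then L^i(σ) = (L*)^i(σ) for every ordinal i ≥ 1, where L^i and (L*)^i denote the transfinite iterates of L and of the modified operator L* respectively. -/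
open Set Filter Topology

universe u

/-! The hypothesis `p ∈ L*_τ(σ)` with `p ∉ D` forces the first branch of the modification to
fail: no subsequence of `σ` has a `τ`-limit in `D`, hence none has an `L`-limit in `D`, and
`L*(σ) = L(σ) ⊆ Dᶜ`. Since `D` is open, `Dᶜ` is `L`-sequentially closed, so every iterate of `L`
at `σ` stays in `Dᶜ`, and on sequences in `Dᶜ` the operators `L*` and `L` coincide. -/

section LimitOperators

variable {X : Type u} {L M : (ℕ → X) → Set X}

theorem tendsto_derivedTop_of_mem (hL : IsLimitOp L) {σ : ℕ → X} {q : X} (hq : q ∈ L σ) :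
    Tendsto σ atTop (@nhds X (derivedTop L hL) q) := by
  let _ := derivedTop L hL
  rw [tendsto_atTop_nhds]
  intro U hqU hU
  have hUc : SeqClosedFor L Uᶜ := hU
  by_contra! hfreq
  have hinf : {n | σ n ∈ Uᶜ}.Infinite := by
    rw [← Nat.frequently_atTop_iff_infinite, frequently_atTop]
    exact hfreq
  exact hUc _ (fun n => Nat.nth_mem_of_infinite hinf n)
    (hL σ _ (Nat.nth_strictMono hinf) hq) hqU

theorem seqClosedFor_compl_of_isOpen {hL : IsLimitOp L} {D : Set X}
    (hD : IsOpen[derivedTop L hL] D) : SeqClosedFor L Dᶜ :=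
  hD

theorem modOp_eq_self {D : Set X} {σ : ℕ → X}
    (h : ∀ φ : ℕ → ℕ, StrictMono φ → ∀ q ∈ L (σ ∘ φ), q ∉ D) : modOp L D σ = L σ := by
  rw [modOp, if_neg]
  rintro ⟨φ, hφ, q, hqD, hq⟩
  exact h φ hφ q hq hqD

theorem modOp_eq_self_of_forall_notMem {D : Set X} (hD : SeqClosedFor L Dᶜ) {ρ : ℕ → X}
    (hρ : ∀ n, ρ n ∉ D) : modOp L D ρ = L ρ :=
  modOp_eq_self fun φ _ _ hq => hD (ρ ∘ φ) (fun n => hρ (φ n)) hq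

theorem notMem_of_mem_modOp_subseq {t : TopologicalSpace X} {D : Set X} {σ : ℕ → X} {p : X}
    (hp : p ∉ D) (hpσ : p ∈ modOp (assocLimOp t) D σ) :
    ∀ φ : ℕ → ℕ, StrictMono φ → ∀ q ∈ assocLimOp t (σ ∘ φ), q ∉ D := by
  intro φ hφ q hq hqD
  rw [modOp, if_pos ⟨φ, hφ, q, hqD, hq⟩] at hpσ
  exact hp hpσ.2

theorem iterOp_one (L : (ℕ → X) → Set X) (σ : ℕ → X) : iterOp L σ 1 = L σ := by
  rw [iterOp, if_pos rfl]

theorem iterOp_of_ne_one (L : (ℕ → X) → Set X) (σ : ℕ → X) {i : Ordinal.{0}} (hi : i ≠ 1) :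
    iterOp L σ i =
      {p | ∃ ρ : ℕ → X, (∀ n, ∃ j : Ordinal.{0}, ∃ _ : j < i, ρ n ∈ iterOp L σ j) ∧ p ∈ L ρ} := by
  rw [iterOp, if_neg hi]

theorem iterOp_subset {C : Set X} (hC : SeqClosedFor L C) {σ : ℕ → X} (hσ : L σ ⊆ C)
    (i : Ordinal.{0}) : iterOp L σ i ⊆ C := by
  induction i using WellFoundedLT.induction with
  | _ i ih =>
    by_cases hi : i = 1
    · rw [hi, iterOp_one]
      exact hσ
    · rw [iterOp_of_ne_one L σ hi]
      rintro q ⟨ρ, hρ, hq⟩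
      refine hC ρ (fun n => ?_) hq
      obtain ⟨j, hj, hρn⟩ := hρ n
      exact ih j hj hρn

theorem iterOp_congr {C : Set X} (hC : SeqClosedFor L C) {σ : ℕ → X} (hσ : L σ ⊆ C)
    (hMσ : M σ = L σ) (hM : ∀ ρ : ℕ → X, (∀ n, ρ n ∈ C) → M ρ = L ρ) (i : Ordinal.{0}) :
    iterOp M σ i = iterOp L σ i := by
  induction i using WellFoundedLT.induction with
  | _ i ih =>
    by_cases hi : i = 1
    · rw [hi, iterOp_one, iterOp_one, hMσ]
    · rw [iterOp_of_ne_one M σ hi, iterOp_of_ne_one L σ hi]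
      ext q
      refine exists_congr fun ρ => ?_
      have hρ_iff : (∀ n, ∃ j : Ordinal.{0}, ∃ _ : j < i, ρ n ∈ iterOp M σ j) ↔
          ∀ n, ∃ j : Ordinal.{0}, ∃ _ : j < i, ρ n ∈ iterOp L σ j := by
        refine forall_congr' fun n => exists_congr fun j => ?_
        exact ⟨fun ⟨hj, h⟩ => ⟨hj, ih j hj ▸ h⟩, fun ⟨hj, h⟩ => ⟨hj, (ih j hj).symm ▸ h⟩⟩
      rw [hρ_iff]
      refine and_congr_right fun hρ => ?_
      have hρC : ∀ n, ρ n ∈ C := fun n => by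
        obtain ⟨j, hj, hρn⟩ := hρ n
        exact iterOp_subset hC hσ j hρn
      rw [hM ρ hρC]

end LimitOperators

theorem stmt_17_general {X : Type u} (L : (ℕ → X) → Set X) (hL : IsLimitOp L)
    (D : Set X)
    (hD : @IsOpen X (derivedTop L hL) D)
    (p : X) (hp : p ∉ D) (σ : ℕ → X)
    (hpσ : p ∈ modOp (assocLimOp (derivedTop L hL)) D σ) :
    ∀ i : Ordinal.{0}, 1 ≤ i → iterOp L σ i = iterOp (modOp L D) σ i := by
  have hDc : SeqClosedFor L Dᶜ := seqClosedFor_compl_of_isOpen hD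
  have hsubseq : ∀ φ : ℕ → ℕ, StrictMono φ → ∀ q ∈ L (σ ∘ φ), q ∉ D := fun φ hφ q hq =>
    notMem_of_mem_modOp_subseq hp hpσ φ hφ q (tendsto_derivedTop_of_mem hL hq)
  have hσ : L σ ⊆ Dᶜ := fun q hq => hsubseq id strictMono_id q hq
  intro i _
  exact (iterOp_congr hDc hσ (modOp_eq_self hsubseq)
    (fun ρ hρ => modOp_eq_self_of_forall_notMem hDc hρ) i).symm

theorem stmt_17 {X : Type u} (L : (ℕ → X) → Set X) (hL : IsLimitOp L)
    (hcoh : CoherentOp L) (D : Set X)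
    (hD : @IsOpen X (derivedTop L hL) D)
    (hT2 : @T2Space D (TopologicalSpace.induced (Subtype.val : D → X) (derivedTop L hL)))
    (hLC : @LocallyCompactSpace D (TopologicalSpace.induced (Subtype.val : D → X) (derivedTop L hL)))
    (p : X) (hp : p ∉ D) (σ : ℕ → X)
    (hpσ : p ∈ modOp (assocLimOp (derivedTop L hL)) D σ) :
    ∀ i : Ordinal.{0}, 1 ≤ i → iterOp L σ i = iterOp (modOp L D) σ i :=
  stmt_17_general L hL D hD p hp σ hpσ
end
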